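/- arXiv:2408.16571 — 3 statements merged into one kernel-verified Lean document; each statement's English description precedes it below -/
import Mathlib

section
/- Let G be a locally profinite group and K a compact open subgroup. There is an isomorphism of ℂ-algebras between the opposite ring of the endomorphism ring End_G(c-Ind_K^G 1) of the compactly induced representation of the trivial representation, and the Hecke algebra H(G,K). -/
set_option synthInstance.maxHeartbeats 1000000
set_option maxHeartbeats 1000000

/-- The ℂ-vector space `C_c^∞(G, ℂ)`. -/
noncomputable def CcInfC (G : Type*) [Group G] [TopologicalSpace G] : Submodule ℂ (G → ℂ) where
  carrier := {f | IsLocallyConstant f ∧ HasCompactSupport f}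
  add_mem' := by
    intro f g hf hg
    exact ⟨hf.1.comp₂ hg.1 (· + ·), hf.2.add hg.2⟩
  zero_mem' := ⟨IsLocallyConstant.const 0, by
    simp [HasCompactSupport, tsupport, Function.support]⟩
  smul_mem' := by
    intro c f hf
    refine ⟨hf.1.comp (c • ·), HasCompactSupport.mono hf.2 ?_⟩
    intro x hx
    simp only [Pi.smul_apply, smul_eq_mul, Function.mem_support] at hx ⊢
    exact fun h => hx (by simp [h])

/-- A left Haar measure on `C_c^∞(G, ℂ)`. -/
structure IsHaarC {G : Type*} [Group G] [TopologicalSpace G]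
    (μ : CcInfC G →ₗ[ℂ] ℂ) : Prop where
  left_invariant : ∀ (g : G) (f f' : CcInfC G),
    (∀ x : G, (f' : G → ℂ) x = (f : G → ℂ) (g⁻¹ * x)) → μ f' = μ f
  pos : ∀ (K : Subgroup G), IsCompact (K : Set G) → IsOpen (K : Set G) →
    ∀ f : CcInfC G, (f : G → ℂ) = Set.indicator (K : Set G) 1 →
      ∃ r : ℚ, 0 < r ∧ μ f = (r : ℂ)

/-- `H(G,K)`: bi-`K`-invariant compactly supported ℂ-valued functions. -/
noncomputable def HeckeSpace (G : Type*) [Group G] [TopologicalSpace G] (K : Subgroup G) :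
    Submodule ℂ (G → ℂ) where
  carrier := {f | HasCompactSupport f ∧
    ∀ k₁ ∈ K, ∀ k₂ ∈ K, ∀ x : G, f (k₁ * x * k₂) = f x}
  add_mem' := by
    intro f g hf hg
    exact ⟨hf.1.add hg.1, fun k₁ h₁ k₂ h₂ x => by
      simp [hf.2 k₁ h₁ k₂ h₂ x, hg.2 k₁ h₁ k₂ h₂ x]⟩
  zero_mem' := ⟨by simp [HasCompactSupport, tsupport, Function.support],
    fun _ _ _ _ _ => rfl⟩
  smul_mem' := by
    intro c f hf
    refine ⟨HasCompactSupport.mono hf.1 ?_, fun k₁ h₁ k₂ h₂ x => by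
      simp [hf.2 k₁ h₁ k₂ h₂ x]⟩
    intro x hx
    simp only [Pi.smul_apply, smul_eq_mul, Function.mem_support] at hx ⊢
    exact fun h => hx (by simp [h])

/-- The compact induction `c-Ind_K^G 1`: compactly supported functions
`f : G → ℂ` with `f(kx) = f(x)` for `k ∈ K`. -/
noncomputable def cInd (G : Type*) [Group G] [TopologicalSpace G] (K : Subgroup G) :
    Submodule ℂ (G → ℂ) where
  carrier := {f | HasCompactSupport f ∧ ∀ k ∈ K, ∀ x : G, f (k * x) = f x}
  add_mem' := by
    intro f g hf hg
    exact ⟨hf.1.add hg.1, fun k hk x => by simp [hf.2 k hk x, hg.2 k hk x]⟩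
  zero_mem' := ⟨by simp [HasCompactSupport, tsupport, Function.support],
    fun _ _ _ => rfl⟩
  smul_mem' := by
    intro c f hf
    refine ⟨HasCompactSupport.mono hf.1 ?_, fun k hk x => by simp [hf.2 k hk x]⟩
    intro x hx
    simp only [Pi.smul_apply, smul_eq_mul, Function.mem_support] at hx ⊢
    exact fun h => hx (by simp [h])

/-- Right translation of `G` on `c-Ind_K^G 1`. -/
noncomputable def rightTransl (G : Type*) [Group G] [TopologicalSpace G]
    [IsTopologicalGroup G] (K : Subgroup G) (g : G) : cInd G K →ₗ[ℂ] cInd G K where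
  toFun f := ⟨fun x => (f : G → ℂ) (x * g),
    ⟨f.2.1.comp_homeomorph (Homeomorph.mulRight g),
     fun k hk x => by simpa [mul_assoc] using f.2.2 k hk (x * g)⟩⟩
  map_add' f₁ f₂ := rfl
  map_smul' c f := rfl

/-- The algebra of `G`-equivariant endomorphisms of `c-Ind_K^G 1`. -/
noncomputable def EquivariantEnd (G : Type*) [Group G] [TopologicalSpace G]
    [IsTopologicalGroup G] (K : Subgroup G) : Subalgebra ℂ (Module.End ℂ (cInd G K)) where
  carrier := {T | ∀ (g : G) (f : cInd G K),
    T (rightTransl G K g f) = rightTransl G K g (T f)}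
  add_mem' := by intro a b ha hb g f; simp [ha g f, hb g f]
  mul_mem' := by intro a b ha hb g f; simp [Module.End.mul_apply, hb g f, ha g _]
  algebraMap_mem' := by
    intro c g f
    simp [Module.algebraMap_end_apply]


/-!
Every `f ∈ c-Ind_K^G 1` is the finite sum `∑_{Ky ∈ K\G} f(y) · ρ(y⁻¹) 1_K`, so a `G`-equivariant
`T` satisfies `(T f)(x) = ∑_{Ky} f(y) (T 1_K)(x y⁻¹)` and is determined by `T 1_K`, which is
bi-`K`-invariant. Conversely this formula turns any bi-`K`-invariant compactly supported `ψ` into an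
equivariant operator with `1_K ↦ ψ`, so `T ↦ T 1_K` is a linear isomorphism onto `H(G,K)`.
Left invariance of `μ` gives `μ(h) = μ(1_K) · ∑_{Ky} h(y⁻¹)` for right-`K`-invariant `h`;
with `Φ T = μ(1_K)⁻¹ (T 1_K)(·⁻¹)` the convolution `Φ T * Φ S` is then the same coset sum
as `(S ∘ T) 1_K`.
-/

theorem Submodule.coe_finsum_apply {R α ι : Type*} [Semiring R] {p : Submodule R (α → R)}
    {f : ι → p} (hf : f.HasFiniteSupport) (a : α) :
    ((∑ᶠ i, f i : p) : α → R) a = ∑ᶠ i, (f i : α → R) a :=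
  map_finsum ((LinearMap.proj a).comp p.subtype) hf

section Cosets

variable {G : Type*} [Group G] (K : Subgroup G)

abbrev RightCosetSpace : Type _ := Quotient (QuotientGroup.rightRel K)

namespace RightCosetSpace

def mk (x : G) : RightCosetSpace K := Quotient.mk _ x

theorem mk_eq_iff {x : G} {q : RightCosetSpace K} : mk K x = q ↔ x * q.out⁻¹ ∈ K := by
  conv_lhs => rw [← q.out_eq]
  rw [mk, Quotient.eq, QuotientGroup.rightRel_apply, ← K.inv_mem_iff, mul_inv_rev, inv_inv]

theorem apply_out_mk {M : Type*} {f : G → M} (hf : ∀ k ∈ K, ∀ x, f (k * x) = f x) (x : G) :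
    f (mk K x).out = f x := by
  have hk : x * (mk K x).out⁻¹ ∈ K := (mk_eq_iff K).1 rfl
  simpa using hf _ (K.inv_mem hk) x

def mulRight (t : G) : RightCosetSpace K ≃ RightCosetSpace K :=
  Quotient.congr (Equiv.mulRight t) fun a b => by
    simp [QuotientGroup.rightRel_apply, mul_assoc]

theorem finsum_out_mul_right {M : Type*} [AddCommMonoid M] {f : G → M}
    (hf : ∀ k ∈ K, ∀ x, f (k * x) = f x) (t : G) :
    ∑ᶠ q : RightCosetSpace K, f (q.out * t) = ∑ᶠ q : RightCosetSpace K, f q.out := by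
  refine (finsum_congr fun q => ?_).trans (finsum_comp_equiv (mulRight K t))
  have : mulRight K t q = mk K (q.out * t) := by
    conv_lhs => rw [← q.out_eq]
    rfl
  rw [this, apply_out_mk K hf]

end RightCosetSpace

namespace Subgroup

noncomputable def charFn : G → ℂ := (K : Set G).indicator 1

variable {K}

theorem charFn_of_mem {x : G} (hx : x ∈ K) : K.charFn x = 1 := Set.indicator_of_mem hx 1

theorem charFn_of_notMem {x : G} (hx : x ∉ K) : K.charFn x = 0 := Set.indicator_of_notMem hx 1

theorem charFn_mul_left {k : G} (hk : k ∈ K) (x : G) : K.charFn (k * x) = K.charFn x := by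
  classical
  simp only [charFn, Set.indicator_apply, SetLike.mem_coe, K.mul_mem_cancel_left hk, Pi.one_apply]

theorem charFn_mul_right {k : G} (hk : k ∈ K) (x : G) : K.charFn (x * k) = K.charFn x := by
  classical
  simp only [charFn, Set.indicator_apply, SetLike.mem_coe, K.mul_mem_cancel_right hk, Pi.one_apply]

theorem charFn_inv (x : G) : K.charFn x⁻¹ = K.charFn x := by
  classical
  simp only [charFn, Set.indicator_apply, SetLike.mem_coe, inv_mem_iff, Pi.one_apply]

end Subgroup

open RightCosetSpace in
theorem RightCosetSpace.finsum_out_mul_charFn {f : G → ℂ} (hf : ∀ k ∈ K, ∀ x, f (k * x) = f x)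
    (x : G) : ∑ᶠ q : RightCosetSpace K, f q.out * K.charFn (x * q.out⁻¹) = f x := by
  rw [finsum_eq_single _ (mk K x) fun q hq => by
      rw [Subgroup.charFn_of_notMem (mt (mk_eq_iff K).2 hq.symm), mul_zero],
    Subgroup.charFn_of_mem ((mk_eq_iff K).1 rfl), mul_one, apply_out_mk K hf]

end Cosets

section Topology

variable {G : Type*} [Group G] [TopologicalSpace G] [IsTopologicalGroup G] (K : Subgroup G)

namespace RightCosetSpace

theorem finite_image_mk (hKo : IsOpen (K : Set G)) {C : Set G} (hC : IsCompact C) :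
    (mk K '' C).Finite := by
  have hU (q : RightCosetSpace K) : IsOpen {y : G | mk K y = q} := by
    simp_rw [mk_eq_iff]
    exact hKo.preimage (continuous_mul_const _)
  obtain ⟨t, ht⟩ := hC.elim_finite_subcover _ hU fun x _ => Set.mem_iUnion.2 ⟨mk K x, rfl⟩
  refine t.finite_toSet.subset ?_
  rintro _ ⟨x, hx, rfl⟩
  simpa using ht hx

theorem hasFiniteSupport_out (hKo : IsOpen (K : Set G)) {M : Type*} [Zero M] {f : G → M}
    (hf : HasCompactSupport f) : (fun q : RightCosetSpace K => f q.out).HasFiniteSupport :=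
  (finite_image_mk K hKo hf).subset fun q hq => ⟨q.out, subset_tsupport f hq, q.out_eq⟩

end RightCosetSpace

namespace Subgroup

theorem isLocallyConstant_charFn (hKo : IsOpen (K : Set G)) : IsLocallyConstant K.charFn :=
  (LocallyConstant.charFn ℂ ⟨K.isClosed_of_isOpen hKo, hKo⟩).isLocallyConstant

theorem hasCompactSupport_charFn (hKc : IsCompact (K : Set G)) : HasCompactSupport K.charFn :=
  HasCompactSupport.intro hKc fun _ hx => charFn_of_notMem hx

end Subgroup

end Topology

namespace HeckeSpace

variable {G : Type*} [Group G] [TopologicalSpace G] {K : Subgroup G}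

theorem apply_mul_left (ψ : HeckeSpace G K) {k : G} (hk : k ∈ K) (x : G) :
    (ψ : G → ℂ) (k * x) = (ψ : G → ℂ) x := by
  simpa using ψ.2.2 k hk 1 K.one_mem x

theorem apply_mul_right (ψ : HeckeSpace G K) {k : G} (hk : k ∈ K) (x : G) :
    (ψ : G → ℂ) (x * k) = (ψ : G → ℂ) x := by
  simpa using ψ.2.2 1 K.one_mem k hk x

theorem apply_mul_mul_apply_inv_mul (φ ψ : HeckeSpace G K) (x : G) {k : G} (hk : k ∈ K)
    (g : G) : (φ : G → ℂ) (g * k) * (ψ : G → ℂ) ((g * k)⁻¹ * x) =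
      (φ : G → ℂ) g * (ψ : G → ℂ) (g⁻¹ * x) := by
  rw [apply_mul_right φ hk, mul_inv_rev, mul_assoc, apply_mul_left ψ (K.inv_mem hk)]

noncomputable def invEquiv [IsTopologicalGroup G] : HeckeSpace G K ≃ₗ[ℂ] HeckeSpace G K :=
  LinearEquiv.ofInvolutive
    { toFun ψ := ⟨fun x => (ψ : G → ℂ) x⁻¹, ψ.2.1.comp_homeomorph (Homeomorph.inv G),
        fun k₁ hk₁ k₂ hk₂ x => by
          beta_reduce
          rw [show (k₁ * x * k₂)⁻¹ = k₂⁻¹ * x⁻¹ * k₁⁻¹ by group]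
          exact ψ.2.2 _ (K.inv_mem hk₂) _ (K.inv_mem hk₁) _⟩
      map_add' _ _ := rfl
      map_smul' _ _ := rfl }
    fun ψ => Subtype.ext <| funext fun x => congrArg (ψ : G → ℂ) (inv_inv x)

end HeckeSpace

section Induced

variable {G : Type*} [Group G] [TopologicalSpace G] [IsTopologicalGroup G] (K : Subgroup G)

open RightCosetSpace

noncomputable def cInd.charFn (hKc : IsCompact (K : Set G)) : cInd G K :=
  ⟨K.charFn, K.hasCompactSupport_charFn hKc, fun _ hk x => Subgroup.charFn_mul_left hk x⟩

theorem cInd.coe_charFn (hKc : IsCompact (K : Set G)) :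
    (cInd.charFn K hKc : G → ℂ) = K.charFn := rfl

theorem rightTransl_charFn_of_mem (hKc : IsCompact (K : Set G)) {k : G} (hk : k ∈ K) :
    rightTransl G K k (cInd.charFn K hKc) = cInd.charFn K hKc :=
  Subtype.ext <| funext fun x => Subgroup.charFn_mul_right hk x

theorem cInd.eq_finsum_rightTransl (hKc : IsCompact (K : Set G)) (hKo : IsOpen (K : Set G))
    (f : cInd G K) : f = ∑ᶠ q : RightCosetSpace K,
      (f : G → ℂ) q.out • rightTransl G K q.out⁻¹ (cInd.charFn K hKc) := by
  have hfin := (hasFiniteSupport_out K hKo f.2.1).fun_smul_left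
    fun q : RightCosetSpace K => rightTransl G K q.out⁻¹ (cInd.charFn K hKc)
  refine Subtype.ext <| funext fun x => ?_
  rw [Submodule.coe_finsum_apply hfin]
  exact (finsum_out_mul_charFn K f.2.2 x).symm

noncomputable def heckeOperatorFun (ψ f : G → ℂ) (x : G) : ℂ :=
  ∑ᶠ q : RightCosetSpace K, f q.out * ψ (x * q.out⁻¹)

theorem EquivariantEnd.apply_eq_heckeOperatorFun (hKc : IsCompact (K : Set G))
    (hKo : IsOpen (K : Set G)) {T : Module.End ℂ (cInd G K)} (hT : T ∈ EquivariantEnd G K)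
    (f : cInd G K) : (T f : G → ℂ) = heckeOperatorFun K (T (cInd.charFn K hKc)) f := by
  have hfin := (hasFiniteSupport_out K hKo f.2.1).fun_smul_left
    fun q : RightCosetSpace K => rightTransl G K q.out⁻¹ (T (cInd.charFn K hKc))
  have hTf : T f = ∑ᶠ q : RightCosetSpace K,
      (f : G → ℂ) q.out • rightTransl G K q.out⁻¹ (T (cInd.charFn K hKc)) := by
    conv_lhs => rw [cInd.eq_finsum_rightTransl K hKc hKo f]
    rw [map_finsum T ((hasFiniteSupport_out K hKo f.2.1).fun_smul_left _)]
    exact finsum_congr fun q => by rw [map_smul, hT]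
  funext x
  rw [hTf, Submodule.coe_finsum_apply hfin]
  rfl

theorem EquivariantEnd.apply_charFn_mem_heckeSpace (hKc : IsCompact (K : Set G))
    {T : Module.End ℂ (cInd G K)} (hT : T ∈ EquivariantEnd G K) :
    (T (cInd.charFn K hKc) : G → ℂ) ∈ HeckeSpace G K := by
  refine ⟨(T (cInd.charFn K hKc)).2.1, fun k₁ hk₁ k₂ hk₂ x => ?_⟩
  have hright := congrArg (fun f : cInd G K => (f : G → ℂ) x) (hT k₂ (cInd.charFn K hKc))
  rw [rightTransl_charFn_of_mem K hKc hk₂] at hright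
  rw [mul_assoc, (T (cInd.charFn K hKc)).2.2 k₁ hk₁]
  exact hright.symm

theorem heckeOperatorFun_mem (ψ : HeckeSpace G K) (f : cInd G K) :
    heckeOperatorFun K ψ f ∈ cInd G K := by
  refine ⟨HasCompactSupport.intro (ψ.2.1.isCompact.mul f.2.1.isCompact) fun x hx => ?_,
    fun k hk x => finsum_congr fun q => by rw [mul_assoc, HeckeSpace.apply_mul_left ψ hk]⟩
  refine finsum_eq_zero_of_forall_eq_zero fun q => ?_
  by_contra hq
  obtain ⟨hf, hψ⟩ := mul_ne_zero_iff.1 hq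
  exact hx (by simpa using Set.mul_mem_mul (subset_tsupport _ hψ) (subset_tsupport _ hf))

noncomputable def heckeOperator (hKo : IsOpen (K : Set G)) (ψ : HeckeSpace G K) :
    cInd G K →ₗ[ℂ] cInd G K where
  toFun f := ⟨heckeOperatorFun K ψ f, heckeOperatorFun_mem K ψ f⟩
  map_add' f g := Subtype.ext <| funext fun x => by
    simp only [heckeOperatorFun, Submodule.coe_add, Pi.add_apply, add_mul]
    exact finsum_add_distrib ((hasFiniteSupport_out K hKo f.2.1).fun_mul_left _)
      ((hasFiniteSupport_out K hKo g.2.1).fun_mul_left _)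
  map_smul' c f := Subtype.ext <| funext fun x => by
    simp only [heckeOperatorFun, SetLike.val_smul, Pi.smul_apply, smul_eq_mul, mul_assoc,
      ← mul_finsum, RingHom.id_apply]

theorem heckeOperator_mem_equivariantEnd (hKo : IsOpen (K : Set G)) (ψ : HeckeSpace G K) :
    heckeOperator K hKo ψ ∈ EquivariantEnd G K := by
  intro t f
  refine Subtype.ext <| funext fun x => ?_
  let F : G → ℂ := fun g => (f : G → ℂ) g * (ψ : G → ℂ) (x * t * g⁻¹)
  have hF : ∀ k ∈ K, ∀ g, F (k * g) = F g := fun k hk g => by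
    simp only [F, mul_inv_rev, f.2.2 k hk, ← mul_assoc,
      HeckeSpace.apply_mul_right ψ (K.inv_mem hk)]
  calc ∑ᶠ q : RightCosetSpace K, (f : G → ℂ) (q.out * t) * (ψ : G → ℂ) (x * q.out⁻¹)
      = ∑ᶠ q : RightCosetSpace K, F (q.out * t) := by simp [F, mul_assoc]
    _ = ∑ᶠ q : RightCosetSpace K, F q.out := finsum_out_mul_right K hF t

theorem heckeOperator_charFn (hKc : IsCompact (K : Set G)) (hKo : IsOpen (K : Set G))
    (ψ : HeckeSpace G K) : (heckeOperator K hKo ψ (cInd.charFn K hKc) : G → ℂ) = ψ := by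
  funext x
  refine (finsum_eq_single _ (mk K 1) fun q hq => ?_).trans ?_
  · have : q.out ∉ K := fun h => hq ((mk_eq_iff K).2 (by simpa using h)).symm
    rw [cInd.coe_charFn, Subgroup.charFn_of_notMem this, zero_mul]
  · have : (mk K 1).out ∈ K := by simpa using (mk_eq_iff K (x := 1)).1 rfl
    rw [cInd.coe_charFn, Subgroup.charFn_of_mem this, one_mul,
      HeckeSpace.apply_mul_right ψ (K.inv_mem this)]

noncomputable def endEquivHecke (hKc : IsCompact (K : Set G)) (hKo : IsOpen (K : Set G)) :
    EquivariantEnd G K ≃ₗ[ℂ] HeckeSpace G K where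
  toFun T := ⟨T.1 (cInd.charFn K hKc), EquivariantEnd.apply_charFn_mem_heckeSpace K hKc T.2⟩
  map_add' _ _ := rfl
  map_smul' _ _ := rfl
  invFun ψ := ⟨heckeOperator K hKo ψ, heckeOperator_mem_equivariantEnd K hKo ψ⟩
  left_inv T := Subtype.ext <| LinearMap.ext fun f =>
    Subtype.ext (EquivariantEnd.apply_eq_heckeOperatorFun K hKc hKo T.2 f).symm
  right_inv ψ := Subtype.ext (heckeOperator_charFn K hKc hKo ψ)

end Induced

section Haar

variable {G : Type*} [Group G] [TopologicalSpace G] [IsTopologicalGroup G]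

noncomputable def CcInfC.leftTransl (y : G) : CcInfC G →ₗ[ℂ] CcInfC G where
  toFun f := ⟨fun x => (f : G → ℂ) (y⁻¹ * x), f.2.1.comp_continuous (continuous_const_mul y⁻¹),
    f.2.2.comp_homeomorph (Homeomorph.mulLeft y⁻¹)⟩
  map_add' _ _ := rfl
  map_smul' _ _ := rfl

noncomputable def CcInfC.charFn (K : Subgroup G) (hKc : IsCompact (K : Set G))
    (hKo : IsOpen (K : Set G)) : CcInfC G :=
  ⟨K.charFn, K.isLocallyConstant_charFn hKo, K.hasCompactSupport_charFn hKc⟩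

theorem IsHaarC.apply_leftTransl {μ : CcInfC G →ₗ[ℂ] ℂ} (hμ : IsHaarC μ) (y : G)
    (f : CcInfC G) : μ (CcInfC.leftTransl y f) = μ f :=
  hμ.left_invariant y f _ fun _ => rfl

/-- The coset `Ky` indexes the left coset `y⁻¹K`, on which `h` takes the value `h(y⁻¹)`. -/
theorem IsHaarC.apply_eq_finsum_mul {μ : CcInfC G →ₗ[ℂ] ℂ} (hμ : IsHaarC μ) (K : Subgroup G)
    (hKo : IsOpen (K : Set G)) (e : CcInfC G) (he : (e : G → ℂ) = K.charFn) (h : CcInfC G)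
    (hh : ∀ k ∈ K, ∀ g, (h : G → ℂ) (g * k) = (h : G → ℂ) g) :
    μ h = (∑ᶠ q : RightCosetSpace K, (h : G → ℂ) q.out⁻¹) * μ e := by
  have hinv : ∀ k ∈ K, ∀ g, (h : G → ℂ) (k * g)⁻¹ = (h : G → ℂ) g⁻¹ := fun k hk g => by
    rw [mul_inv_rev, hh _ (K.inv_mem hk)]
  have hfin : (fun q : RightCosetSpace K =>
      (h : G → ℂ) q.out⁻¹ • CcInfC.leftTransl q.out⁻¹ e).HasFiniteSupport :=
    (RightCosetSpace.hasFiniteSupport_out K hKo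
      (h.2.2.comp_homeomorph (Homeomorph.inv G))).fun_smul_left _
  have hdecomp : h = ∑ᶠ q : RightCosetSpace K,
      (h : G → ℂ) q.out⁻¹ • CcInfC.leftTransl q.out⁻¹ e := by
    refine Subtype.ext <| funext fun g => ?_
    rw [Submodule.coe_finsum_apply hfin]
    simpa [CcInfC.leftTransl, he, ← K.charFn_inv (_ * g)] using
      (RightCosetSpace.finsum_out_mul_charFn K (f := fun y => (h : G → ℂ) y⁻¹) hinv g⁻¹).symm
  conv_lhs => rw [hdecomp]
  rw [map_finsum μ hfin, finsum_mul]
  exact finsum_congr fun q => by rw [map_smul, hμ.apply_leftTransl, smul_eq_mul]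

end Haar

section Isomorphism

variable {G : Type*} [Group G] [TopologicalSpace G] [IsTopologicalGroup G] (K : Subgroup G)

noncomputable def heckeEquiv (hKc : IsCompact (K : Set G)) (hKo : IsOpen (K : Set G)) {c : ℂ}
    (hc : c ≠ 0) : EquivariantEnd G K ≃ₗ[ℂ] HeckeSpace G K :=
  (endEquivHecke K hKc hKo).trans
    (HeckeSpace.invEquiv.trans (LinearEquiv.smulOfNeZero ℂ _ c⁻¹ (inv_ne_zero hc)))

theorem heckeEquiv_apply (hKc : IsCompact (K : Set G)) (hKo : IsOpen (K : Set G)) {c : ℂ}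
    (hc : c ≠ 0) (T : EquivariantEnd G K) (x : G) :
    (heckeEquiv K hKc hKo hc T : G → ℂ) x = c⁻¹ * (T.1 (cInd.charFn K hKc) : G → ℂ) x⁻¹ :=
  rfl

theorem heckeEquiv_one (hKc : IsCompact (K : Set G)) (hKo : IsOpen (K : Set G)) {c : ℂ}
    (hc : c ≠ 0) : (heckeEquiv K hKc hKo hc 1 : G → ℂ) = fun x => c⁻¹ * K.charFn x :=
  funext fun x => congrArg (c⁻¹ * ·) (K.charFn_inv x)

theorem heckeEquiv_mul_apply {μ : CcInfC G →ₗ[ℂ] ℂ} (hμ : IsHaarC μ)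
    (hKc : IsCompact (K : Set G)) (hKo : IsOpen (K : Set G)) (hc : μ (CcInfC.charFn K hKc hKo) ≠ 0)
    (S T : EquivariantEnd G K) (x : G) (h : CcInfC G)
    (hh : (h : G → ℂ) = fun g => (heckeEquiv K hKc hKo hc T : G → ℂ) g *
      (heckeEquiv K hKc hKo hc S : G → ℂ) (g⁻¹ * x)) :
    (heckeEquiv K hKc hKo hc (S * T) : G → ℂ) x = μ h := by
  have hright : ∀ k ∈ K, ∀ g, (h : G → ℂ) (g * k) = (h : G → ℂ) g := by
    rw [hh]
    exact fun k hk g => HeckeSpace.apply_mul_mul_apply_inv_mul _ _ x hk g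
  rw [hμ.apply_eq_finsum_mul K hKo (CcInfC.charFn K hKc hKo) rfl h hright, hh, heckeEquiv_apply,
    Subalgebra.coe_mul, Module.End.mul_apply,
    EquivariantEnd.apply_eq_heckeOperatorFun K hKc hKo S.2, heckeOperatorFun]
  simp only [heckeEquiv_apply, inv_inv, mul_inv_rev]
  rw [finsum_mul, mul_finsum]
  refine finsum_congr fun q => ?_
  field_simp

end Isomorphism

theorem equivariantEnd_op_iso_hecke_general
    (G : Type*) [Group G] [TopologicalSpace G] [IsTopologicalGroup G]
    (μ : CcInfC G →ₗ[ℂ] ℂ) (hμ : IsHaarC μ)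
    (K : Subgroup G) (hKc : IsCompact (K : Set G)) (hKo : IsOpen (K : Set G)) :
    ∃ Φ : EquivariantEnd G K ≃ₗ[ℂ] HeckeSpace G K,
      -- anti-multiplicativity: composition goes to convolution in reverse order
      (∀ (S T : EquivariantEnd G K) (x : G) (h : CcInfC G),
        ((h : G → ℂ) =
          fun g => (Φ T : G → ℂ) g * (Φ S : G → ℂ) (g⁻¹ * x)) →
        (Φ (S * T) : G → ℂ) x = μ h) ∧
      -- the identity goes to the unit of the Hecke algebra
      (∀ hK : CcInfC G, ((hK : G → ℂ) = Set.indicator (K : Set G) 1) →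
        (Φ 1 : G → ℂ) = fun x => (μ hK)⁻¹ * Set.indicator (K : Set G) 1 x) := by
  obtain ⟨r, hr, hμr⟩ := hμ.pos K hKc hKo (CcInfC.charFn K hKc hKo) rfl
  have hc : μ (CcInfC.charFn K hKc hKo) ≠ 0 := by
    rw [hμr]
    exact_mod_cast hr.ne'
  refine ⟨heckeEquiv K hKc hKo hc, heckeEquiv_mul_apply K hμ hKc hKo hc, fun e he => ?_⟩
  obtain rfl : e = CcInfC.charFn K hKc hKo := Subtype.ext he
  exact heckeEquiv_one K hKc hKo hc

/-- **`End_G(c-Ind_K^G 1)^op ≅ H(G,K)`**: there is a ℂ-linear bijection `Φ` from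
the `G`-equivariant endomorphism algebra of `c-Ind_K^G 1` to the Hecke algebra
`H(G,K)` which is an isomorphism from the opposite ring to the convolution
algebra: `Φ(S ∘ T)` is the convolution `Φ(T) * Φ(S)`, and `Φ(id)` is the unit
`μ(K)⁻¹ · 1_K`. -/
theorem equivariantEnd_op_iso_hecke
    (G : Type*) [Group G] [TopologicalSpace G] [IsTopologicalGroup G]
    [LocallyCompactSpace G] [TotallyDisconnectedSpace G] [T2Space G]
    (μ : CcInfC G →ₗ[ℂ] ℂ) (hμ : IsHaarC μ)
    (K : Subgroup G) (hKc : IsCompact (K : Set G)) (hKo : IsOpen (K : Set G)) :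
    ∃ Φ : EquivariantEnd G K ≃ₗ[ℂ] HeckeSpace G K,
      -- anti-multiplicativity: composition goes to convolution in reverse order
      (∀ (S T : EquivariantEnd G K) (x : G) (h : CcInfC G),
        ((h : G → ℂ) =
          fun g => (Φ T : G → ℂ) g * (Φ S : G → ℂ) (g⁻¹ * x)) →
        (Φ (S * T) : G → ℂ) x = μ h) ∧
      -- the identity goes to the unit of the Hecke algebra
      (∀ hK : CcInfC G, ((hK : G → ℂ) = Set.indicator (K : Set G) 1) →
        (Φ 1 : G → ℂ) = fun x => (μ hK)⁻¹ * Set.indicator (K : Set G) 1 x) :=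
  equivariantEnd_op_iso_hecke_general G μ hμ K hKc hKo
end

section
/- Let A be a p-adically complete commutative ring. The multiplicative monoid A^♭ = lim_{x ↦ x^p} A (inverse limit along the p-power map), equipped with the addition (x + y)_i = lim_{n→∞} (x_{i−n} + y_{i−n})^{p^n}, is a commutative ring, and the natural projection A^♭ → lim_{x ↦ x^p} A/pA is an isomorphism of rings; moreover A^♭ is a perfect ring of characteristic p. -/
open Filter Topology

/-- The tilt `A^♭ = lim_{x ↦ x^p} A` as a bare type: sequences `(x_i)_{i ≤ 0}`
(indexed here by `n ↦ x_{-n}`) with `x_{i-1}^p = x_i`. -/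
def PTilt (p : ℕ) (A : Type*) [CommRing A] : Type _ :=
  {x : ℕ → A // ∀ n : ℕ, (x (n + 1)) ^ p = x n}

/-- The topology of `A` is the `p`-adic topology: the sets `pⁿA` form a
fundamental system of neighborhoods of `0`. -/
def PAdicBasis (p : ℕ) (A : Type*) [CommRing A] [TopologicalSpace A] : Prop :=
  (∀ n : ℕ, {a : A | ∃ b : A, a = (p : A) ^ n * b} ∈ 𝓝 (0 : A)) ∧
  (∀ U ∈ 𝓝 (0 : A), ∃ n : ℕ, {a : A | ∃ b : A, a = (p : A) ^ n * b} ⊆ U)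

/-- `A` is `p`-adically complete: every `p`-adic Cauchy sequence converges. -/
def PAdicComplete (p : ℕ) (A : Type*) [CommRing A] [TopologicalSpace A] : Prop :=
  ∀ f : ℕ → A,
    (∀ n : ℕ, ∃ N : ℕ, ∀ j k : ℕ, N ≤ j → N ≤ k →
      ∃ b : A, f j - f k = (p : A) ^ n * b) →
    ∃ L : A, Tendsto f atTop (𝓝 L)

/-- The natural projection `A^♭ → lim_{x ↦ x^p} A/pA`. -/
def ptiltToMod (p : ℕ) (A : Type*) [CommRing A] :
    PTilt p A → {y : ℕ → A ⧸ Ideal.span ({(p : A)} : Set A) //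
      ∀ n : ℕ, (y (n + 1)) ^ p = y n} :=
  fun x => ⟨fun n => Ideal.Quotient.mk _ (x.1 n), fun n => by
    rw [← map_pow, x.2 n]⟩

/-- The required properties of the ring structure on the tilt `A^♭`:
multiplication is componentwise, addition is given by the limit
`(x + y)_i = lim_n (x_{i-n} + y_{i-n})^{p^n}`, the projection to
`lim_{x ↦ x^p} A/pA` is an isomorphism of rings, and `A^♭` is a perfect
ring of characteristic `p`. -/
def TiltSpec (p : ℕ) (A : Type*) [CommRing A] [TopologicalSpace A]
    (R : CommRing (PTilt p A)) : Prop :=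
  letI := R
  -- multiplication is componentwise
  (∀ x y : PTilt p A, ∀ n : ℕ, (x * y).1 n = x.1 n * y.1 n) ∧
  -- addition is the limit of `(x_{i-n} + y_{i-n})^{p^n}`
  (∀ x y : PTilt p A, ∀ n : ℕ,
    Tendsto (fun k : ℕ => (x.1 (n + k) + y.1 (n + k)) ^ p ^ k)
      atTop (𝓝 ((x + y).1 n))) ∧
  -- the projection `A^♭ → lim A/pA` is a bijective ring homomorphism
  Function.Bijective (ptiltToMod p A) ∧
  (∀ x y : PTilt p A, ∀ n : ℕ,
    (ptiltToMod p A (x * y)).1 n = (ptiltToMod p A x).1 n * (ptiltToMod p A y).1 n) ∧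
  (∀ x y : PTilt p A, ∀ n : ℕ,
    (ptiltToMod p A (x + y)).1 n = (ptiltToMod p A x).1 n + (ptiltToMod p A y).1 n) ∧
  (ptiltToMod p A 1).1 0 = 1 ∧
  -- `A^♭` has characteristic `p` and is perfect
  ((p : PTilt p A) = 0) ∧
  Function.Bijective (fun x : PTilt p A => x ^ p)
/-!
If `x ≡ x'` modulo `p` componentwise, then `x_n = x_{n+k}^{p^k} ≡ x'_{n+k}^{p^k} = x'_n`
modulo `p^{k+1}` for every `k`, so reduction modulo `p` is injective on `A^♭`. The same
congruence makes `l_{n+k}^{p^k}` a `p`-adic Cauchy sequence in `k` for arbitrary lifts `l_n` of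
a compatible sequence in `A/pA`, and the limits form a preimage, so reduction is bijective.
Transporting the ring structure of `lim_{x ↦ x^p} A/pA`, a perfect ring of characteristic `p`,
along this bijection gives `A^♭` its ring structure, and the congruence once more identifies its
sum with the limit formula.
-/

section FrobeniusOfNatCastEqZero

variable {R : Type*} [CommRing R] {p : ℕ}

theorem add_pow_prime_of_natCast_eq_zero (hp : p.Prime) (hR : (p : R) = 0) (a b : R) :
    (a + b) ^ p = a ^ p + b ^ p := by
  obtain ⟨r, hr⟩ := exists_add_pow_prime_eq hp a b
  rw [hr, hR, zero_mul, zero_mul, zero_mul, add_zero]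

theorem neg_pow_prime_of_natCast_eq_zero (hp : p.Prime) (hR : (p : R) = 0) (a : R) :
    (-a) ^ p = -a ^ p := by
  refine eq_neg_of_add_eq_zero_right ?_
  rw [← add_pow_prime_of_natCast_eq_zero hp hR, add_neg_cancel, zero_pow hp.ne_zero]

/- Mathlib's `Perfection.subring` assumes `CharP R p`, which fails for `R = A/pA = 0` when `p` is a
unit of `A`. -/
variable (R) in
def perfectionSubring (hp : p.Prime) (hR : (p : R) = 0) : Subring (ℕ → R) where
  carrier := {y | ∀ n, y (n + 1) ^ p = y n}
  one_mem' _ := one_pow p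
  zero_mem' _ := zero_pow hp.ne_zero
  mul_mem' ha hb n := by simp only [Pi.mul_apply, mul_pow, ha n, hb n]
  add_mem' ha hb n := by
    simp only [Pi.add_apply, add_pow_prime_of_natCast_eq_zero hp hR, ha n, hb n]
  neg_mem' ha n := by simp only [Pi.neg_apply, neg_pow_prime_of_natCast_eq_zero hp hR, ha n]

end FrobeniusOfNatCastEqZero

theorem quotient_mk_eq_iff_dvd_sub {R : Type*} [CommRing R] (r a b : R) :
    Ideal.Quotient.mk (Ideal.span {r}) a = Ideal.Quotient.mk (Ideal.span {r}) b ↔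
      r ∣ a - b := by
  rw [Ideal.Quotient.eq, Ideal.mem_span_singleton]

theorem pow_succ_dvd_sub_of_le {R : Type*} [CommRing R] {r : R} {f : ℕ → R}
    (h : ∀ k, r ^ (k + 1) ∣ f (k + 1) - f k) {k j : ℕ} (hkj : k ≤ j) :
    r ^ (k + 1) ∣ f j - f k := by
  induction j, hkj using Nat.le_induction with
  | base => simp
  | succ j hkj ih =>
    rw [← sub_add_sub_cancel (f (j + 1)) (f j)]
    exact dvd_add ((pow_dvd_pow r (by omega)).trans (h j)) ih

theorem pow_succ_dvd_sub_pow_pow {R : Type*} [CommRing R] {p : ℕ} {l : ℕ → R}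
    (hl : ∀ m, (p : R) ∣ l (m + 1) ^ p - l m) (n k : ℕ) :
    (p : R) ^ (k + 1) ∣ l (n + (k + 1)) ^ p ^ (k + 1) - l (n + k) ^ p ^ k := by
  rw [show p ^ (k + 1) = p * p ^ k from pow_succ' p k, pow_mul]
  exact dvd_sub_pow_of_dvd_sub (hl (n + k)) k

section ModPerfection

variable (p : ℕ) (A : Type*) [CommRing A]

theorem natCast_quotient_span_self : ((p : ℕ) : A ⧸ Ideal.span ({(p : A)} : Set A)) = 0 := by
  rw [← map_natCast (Ideal.Quotient.mk _), Ideal.Quotient.mk_singleton_self]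

abbrev ModPerfection : Type _ :=
  {y : ℕ → A ⧸ Ideal.span ({(p : A)} : Set A) // ∀ n : ℕ, (y (n + 1)) ^ p = y n}

instance [Fact p.Prime] : CommRing (ModPerfection p A) :=
  inferInstanceAs (CommRing (perfectionSubring _ Fact.out (natCast_quotient_span_self p A)))

theorem ModPerfection.natCast_eq_zero [Fact p.Prime] : (p : ModPerfection p A) = 0 :=
  Subtype.ext (funext fun _ => natCast_quotient_span_self p A)

end ModPerfection

section PAdic

variable {p : ℕ} {A : Type*} [CommRing A] [TopologicalSpace A]

theorem PAdicBasis.tendsto_of_pow_dvd_sub [IsTopologicalAddGroup A] (hbasis : PAdicBasis p A)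
    {f : ℕ → A} {L : A} (h : ∀ k, (p : A) ^ k ∣ L - f k) : Tendsto f atTop (𝓝 L) := by
  rw [← tendsto_sub_nhds_zero_iff, tendsto_def]
  intro U hU
  obtain ⟨n, hn⟩ := hbasis.2 U hU
  filter_upwards [eventually_ge_atTop n] with k hk
  obtain ⟨b, hb⟩ := (pow_dvd_pow (p : A) hk).trans (h k)
  exact hn ⟨-b, by rw [mul_neg, ← hb, neg_sub]⟩

theorem PAdicBasis.isClosed_setOf_pow_dvd [IsTopologicalAddGroup A] (hbasis : PAdicBasis p A)
    (m : ℕ) : IsClosed {a : A | (p : A) ^ m ∣ a} := by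
  let J := (Ideal.span {(p : A) ^ m}).toAddSubgroup
  have hJ : (J : Set A) = {a : A | (p : A) ^ m ∣ a} := Set.ext fun _ => Ideal.mem_span_singleton
  rw [← hJ]
  refine J.isClosed_of_isOpen (J.isOpen_of_mem_nhds (g := 0) ?_)
  rw [hJ]
  exact Filter.mem_of_superset (hbasis.1 m) fun a ⟨b, hb⟩ => ⟨b, hb⟩

theorem PAdicComplete.exists_tendsto (hcomplete : PAdicComplete p A) {f : ℕ → A}
    (h : ∀ k, (p : A) ^ (k + 1) ∣ f (k + 1) - f k) : ∃ L, Tendsto f atTop (𝓝 L) :=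
  hcomplete f fun m => ⟨m, fun j k hj hk => by
    have hjk := dvd_sub (pow_succ_dvd_sub_of_le h hj) (pow_succ_dvd_sub_of_le h hk)
    rw [sub_sub_sub_cancel_right] at hjk
    exact (pow_dvd_pow _ m.le_succ).trans hjk⟩

end PAdic

namespace PTilt

variable {p : ℕ} {A : Type*} [CommRing A]

theorem val_add_pow_pow (x : PTilt p A) (n k : ℕ) : x.1 (n + k) ^ p ^ k = x.1 n := by
  induction k with
  | zero => simp
  | succ k ih => rw [pow_succ', pow_mul, ← Nat.add_assoc, x.2 (n + k), ih]

theorem tendsto_pow_of_dvd_sub [TopologicalSpace A] [IsTopologicalAddGroup A]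
    (hbasis : PAdicBasis p A) (x : PTilt p A) {a : ℕ → A} (h : ∀ m, (p : A) ∣ x.1 m - a m)
    (n : ℕ) : Tendsto (fun k => a (n + k) ^ p ^ k) atTop (𝓝 (x.1 n)) :=
  hbasis.tendsto_of_pow_dvd_sub fun k => by
    rw [← x.val_add_pow_pow n k]
    exact (pow_dvd_pow _ k.le_succ).trans (dvd_sub_pow_of_dvd_sub (h (n + k)) k)

end PTilt

section Reduction

variable {p : ℕ} {A : Type*} [CommRing A] [TopologicalSpace A]

theorem ptiltToMod_injective [IsTopologicalAddGroup A] [T2Space A] (hbasis : PAdicBasis p A) :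
    Function.Injective (ptiltToMod p A) := by
  intro x x' hxx'
  have hdvd : ∀ m, (p : A) ∣ x.1 m - x'.1 m := fun m =>
    (quotient_mk_eq_iff_dvd_sub _ _ _).1 (congrArg (·.1 m) hxx')
  refine Subtype.ext (funext fun n => ?_)
  refine tendsto_nhds_unique (x.tendsto_pow_of_dvd_sub hbasis hdvd n) ?_
  simp only [x'.val_add_pow_pow]
  exact tendsto_const_nhds

theorem ptiltToMod_surjective [IsTopologicalRing A] [T2Space A] (hbasis : PAdicBasis p A)
    (hcomplete : PAdicComplete p A) : Function.Surjective (ptiltToMod p A) := by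
  intro y
  choose l hl using fun n => Ideal.Quotient.mk_surjective (y.1 n)
  have hl_compat : ∀ m, (p : A) ∣ l (m + 1) ^ p - l m := fun m => by
    rw [← quotient_mk_eq_iff_dvd_sub, map_pow, hl, hl]
    exact y.2 m
  let g (n k : ℕ) : A := l (n + k) ^ p ^ k
  have hstep : ∀ n k, (p : A) ^ (k + 1) ∣ g n (k + 1) - g n k :=
    pow_succ_dvd_sub_pow_pow hl_compat
  choose x hx using fun n => hcomplete.exists_tendsto (hstep n)
  have hx_compat : ∀ n, x (n + 1) ^ p = x n := fun n => by
    refine tendsto_nhds_unique ((hx (n + 1)).pow p) ?_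
    convert (hx n).comp (tendsto_add_atTop_nat 1) using 2 with k
    show (l (n + 1 + k) ^ p ^ k) ^ p = l (n + (k + 1)) ^ p ^ (k + 1)
    rw [← pow_mul, ← pow_succ, Nat.add_right_comm, Nat.add_assoc]
  have hx_lift : ∀ n, (p : A) ∣ x n - l n := fun n => by
    simpa using (hbasis.isClosed_setOf_pow_dvd 1).mem_of_tendsto ((hx n).sub_const (l n))
      (Eventually.of_forall fun j => by simpa [g] using pow_succ_dvd_sub_of_le (hstep n) j.zero_le)
  exact ⟨⟨x, hx_compat⟩, Subtype.ext (funext fun n => by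
    rw [← hl n]
    exact (quotient_mk_eq_iff_dvd_sub _ _ _).2 (hx_lift n))⟩

end Reduction

namespace PTilt

variable {p : ℕ} {A : Type*} [CommRing A] [Fact p.Prime] [CommRing (PTilt p A)]

theorem val_mul (φ : PTilt p A ≃+* ModPerfection p A) (hφ : ∀ x, φ x = ptiltToMod p A x)
    (x y : PTilt p A) (n : ℕ) : (x * y).1 n = x.1 n * y.1 n := by
  let w : PTilt p A := ⟨fun m => x.1 m * y.1 m, fun m => by rw [mul_pow, x.2, y.2]⟩
  suffices x * y = w from congrArg (·.1 n) this
  refine φ.injective (Subtype.ext (funext fun m => ?_))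
  rw [map_mul, hφ, hφ, hφ]
  exact (map_mul (Ideal.Quotient.mk (Ideal.span {(p : A)})) _ _).symm

theorem val_one (φ : PTilt p A ≃+* ModPerfection p A) (hφ : ∀ x, φ x = ptiltToMod p A x)
    (n : ℕ) : (1 : PTilt p A).1 n = 1 := by
  let c : PTilt p A := ⟨fun _ => 1, fun _ => one_pow p⟩
  suffices (1 : PTilt p A) = c from congrArg (·.1 n) this
  refine φ.injective (Subtype.ext (funext fun m => ?_))
  rw [map_one, hφ]
  exact (map_one (Ideal.Quotient.mk (Ideal.span {(p : A)}))).symm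

theorem val_pow (φ : PTilt p A ≃+* ModPerfection p A) (hφ : ∀ x, φ x = ptiltToMod p A x)
    (x : PTilt p A) (m n : ℕ) : (x ^ m).1 n = x.1 n ^ m := by
  induction m with
  | zero => rw [pow_zero, pow_zero, val_one φ hφ]
  | succ m ih => rw [pow_succ, pow_succ, val_mul φ hφ, ih]

theorem natCast_eq_zero (φ : PTilt p A ≃+* ModPerfection p A) : (p : PTilt p A) = 0 :=
  φ.injective (by rw [map_natCast, map_zero, ModPerfection.natCast_eq_zero])

theorem bijective_pow (φ : PTilt p A ≃+* ModPerfection p A)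
    (hφ : ∀ x, φ x = ptiltToMod p A x) : Function.Bijective (fun x : PTilt p A => x ^ p) := by
  let shift (x : PTilt p A) : PTilt p A := ⟨fun n => x.1 (n + 1), fun n => x.2 (n + 1)⟩
  refine Function.bijective_iff_has_inverse.mpr ⟨shift, fun x => ?_, fun x => ?_⟩ <;>
    refine Subtype.ext (funext fun n => ?_)
  · exact (val_pow φ hφ x p (n + 1)).trans (x.2 n)
  · exact (val_pow φ hφ (shift x) p n).trans (x.2 n)

theorem tendsto_val_add [TopologicalSpace A] [IsTopologicalAddGroup A] (hbasis : PAdicBasis p A)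
    (φ : PTilt p A ≃+* ModPerfection p A) (hφ : ∀ x, φ x = ptiltToMod p A x)
    (x y : PTilt p A) (n : ℕ) :
    Tendsto (fun k => (x.1 (n + k) + y.1 (n + k)) ^ p ^ k) atTop (𝓝 ((x + y).1 n)) := by
  refine (x + y).tendsto_pow_of_dvd_sub hbasis (a := fun m => x.1 m + y.1 m) (fun m => ?_) n
  rw [← quotient_mk_eq_iff_dvd_sub, map_add]
  have hadd := map_add φ x y
  rw [hφ, hφ, hφ] at hadd
  exact congrArg (·.1 m) hadd

end PTilt

/-- **The tilt of a `p`-adically complete ring is a perfect ring of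
characteristic `p`**: the monoid `A^♭ = lim_{x ↦ x^p} A` with componentwise
multiplication and limit addition is a commutative ring, isomorphic to
`lim_{x ↦ x^p} A/pA` via the natural projection, and perfect of characteristic `p`. -/
theorem tilt_is_perfect_ring (p : ℕ) (hp : p.Prime) (A : Type*) [CommRing A]
    [TopologicalSpace A] [IsTopologicalRing A] [T2Space A]
    (hbasis : PAdicBasis p A) (hcomplete : PAdicComplete p A) :
    ∃ R : CommRing (PTilt p A), TiltSpec p A R := by
  have := Fact.mk hp
  have hbij : Function.Bijective (ptiltToMod p A) :=
    ⟨ptiltToMod_injective hbasis, ptiltToMod_surjective hbasis hcomplete⟩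
  let e := Equiv.ofBijective _ hbij
  let R : CommRing (PTilt p A) := e.commRing
  let φ : PTilt p A ≃+* ModPerfection p A := e.ringEquiv
  have hφ : ∀ x, φ x = ptiltToMod p A x := fun _ => rfl
  refine ⟨R, PTilt.val_mul φ hφ, PTilt.tendsto_val_add hbasis φ hφ, hbij,
    fun x y n => congrArg (·.1 n) (map_mul φ x y),
    fun x y n => congrArg (·.1 n) (map_add φ x y), congrArg (·.1 0) (map_one φ),
    PTilt.natCast_eq_zero φ, PTilt.bijective_pow φ hφ⟩
end

section
/- Let Γ be a finitely generated group acting on an affine group scheme Ĝ over a base ring R. The functor sending a commutative R-algebra Λ to the set of group-homomorphism sections of the projection Ĝ(Λ) ⋊ Γ → Γ is representable by an affine scheme over R, namely a closed subscheme of Ĝ^S for any finite generating set S of Γ. -/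
/-!
A 1-cocycle `c : Γ → Ĝ(Λ)` is the same as a section `γ ↦ (c γ, γ)` of `Ĝ(Λ) ⋊ Γ → Γ`, so it is
determined by its values on the generators `S`; a tuple `t : S → Ĝ(Λ)` extends to a cocycle
exactly when the homomorphism `FreeGroup S → Ĝ(Λ) ⋊ Γ`, `s ↦ (t s, s)`, kills every relator.
Evaluating the relators at the universal tuple over `AS` gives points of `Ĝ(AS)`, and such a point
becomes `1` along `f : AS ⟶ Λ` iff `f` equalizes the two classifying maps `A ⟶ AS` of the point
and of `1`, i.e. iff `f` kills the ideal of their differences. Hence `Z¹(Γ, Ĝ)` is corepresented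
by the quotient of `AS` by this relator ideal.
-/

open CategoryTheory

variable {R : CommRingCat.{0}} (G : Under R ⥤ GrpCat.{0})
  (Γ : Type) [Group Γ] (φ : Γ →* Aut G)

/-- The functor of 1-cocycles `Λ ↦ Z¹(Γ, Ĝ(Λ))`: maps `c : Γ → Ĝ(Λ)` with
`c(γγ') = c(γ) · γ(c(γ'))`, equivalently group-homomorphism sections of
`Ĝ(Λ) ⋊ Γ → Γ`. -/
def cocycleFunctor : Under R ⥤ Type where
  obj Λ := {c : Γ → G.obj Λ // ∀ γ₁ γ₂ : Γ,
    c (γ₁ * γ₂) = c γ₁ * ((φ γ₁).hom.app Λ) (c γ₂)}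
  map {Λ Λ'} f := TypeCat.ofHom fun c => ⟨fun γ => (G.map f) (c.1 γ), by
    intro γ₁ γ₂
    have h := congrArg (fun m : G.obj Λ ⟶ G.obj Λ' => m (c.1 γ₂))
      ((φ γ₁).hom.naturality f)
    simp only [CategoryTheory.comp_apply] at h
    show (G.map f) (c.1 (γ₁ * γ₂)) = _
    rw [c.2 γ₁ γ₂, map_mul]
    congr 1
    exact (ConcreteCategory.congr_hom ((φ γ₁).hom.naturality f) (c.1 γ₂)).symm⟩
  map_id := by intro Λ; ext c γ; simp
  map_comp := by intro Λ₁ Λ₂ Λ₃ f g; ext c γ; simp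

/-- The functor `Λ ↦ Ĝ(Λ)^S` of `S`-tuples of points of `Ĝ`. -/
def tupleFunctor (S : Finset Γ) : Under R ⥤ Type where
  obj Λ := S → G.obj Λ
  map f := TypeCat.ofHom fun t s => (G.map f) (t s)
  map_id := by intro Λ; ext t s; simp
  map_comp := by intro Λ₁ Λ₂ Λ₃ f g; ext t s; simp

section Cocycle

variable {N H : Type*} [Group N] [Group H] (ρ : H →* MulAut N)

def IsOneCocycle (c : H → N) : Prop := ∀ h₁ h₂, c (h₁ * h₂) = c h₁ * ρ h₁ (c h₂)

variable {ρ}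

namespace IsOneCocycle

variable {c : H → N}

theorem map_one (hc : IsOneCocycle ρ c) : c 1 = 1 := by
  simpa [_root_.map_one] using hc 1 1

def toSection (hc : IsOneCocycle ρ c) : H →* N ⋊[ρ] H where
  toFun h := ⟨c h, h⟩
  map_one' := SemidirectProduct.ext hc.map_one rfl
  map_mul' h₁ h₂ := SemidirectProduct.ext (hc h₁ h₂) rfl

@[simp]
theorem toSection_apply (hc : IsOneCocycle ρ c) (h : H) : hc.toSection h = ⟨c h, h⟩ := rfl

end IsOneCocycle

theorem isOneCocycle_left_of_rightHom_comp_eq_id (σ : H →* N ⋊[ρ] H)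
    (hσ : SemidirectProduct.rightHom.comp σ = MonoidHom.id H) :
    IsOneCocycle ρ fun h => (σ h).left := by
  intro h₁ h₂
  show (σ (h₁ * h₂)).left = (σ h₁).left * ρ h₁ (σ h₂).left
  have hright : (σ h₁).right = h₁ := DFunLike.congr_fun hσ h₁
  rw [map_mul, SemidirectProduct.mul_left, hright]

variable {ι : Type*} (ρ) (g : ι → H)

def tupleLift (t : ι → N) : FreeGroup ι →* N ⋊[ρ] H :=
  FreeGroup.lift fun i => ⟨t i, g i⟩

theorem rightHom_comp_tupleLift (t : ι → N) :
    SemidirectProduct.rightHom.comp (tupleLift ρ g t) = FreeGroup.lift g :=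
  FreeGroup.ext_hom _ _ fun i => by simp [tupleLift]

variable {ρ g}

theorem IsOneCocycle.tupleLift_eq {c : H → N} (hc : IsOneCocycle ρ c) :
    tupleLift ρ g (c ∘ g) = hc.toSection.comp (FreeGroup.lift g) :=
  FreeGroup.ext_hom _ _ fun i => by simp [tupleLift]

theorem IsOneCocycle.ext_of_comp_eq (hg : Function.Surjective (FreeGroup.lift g))
    {c c' : H → N} (hc : IsOneCocycle ρ c) (hc' : IsOneCocycle ρ c') (h : c ∘ g = c' ∘ g) :
    c = c' := by
  have hsection : hc.toSection = hc'.toSection := by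
    rw [← MonoidHom.cancel_right hg, ← hc.tupleLift_eq, ← hc'.tupleLift_eq, h]
  funext h
  exact congrArg SemidirectProduct.left (DFunLike.congr_fun hsection h)

theorem exists_isOneCocycle_comp_eq_iff (hg : Function.Surjective (FreeGroup.lift g))
    (t : ι → N) :
    (∃ c, IsOneCocycle ρ c ∧ c ∘ g = t) ↔
      ∀ w, FreeGroup.lift g w = 1 → (tupleLift ρ g t w).left = 1 := by
  constructor
  · rintro ⟨c, hc, rfl⟩ w hw
    rw [hc.tupleLift_eq, MonoidHom.comp_apply, hw, map_one]
    rfl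
  · intro h
    have hker : (FreeGroup.lift g).ker ≤ (tupleLift ρ g t).ker := fun w hw => by
      rw [MonoidHom.mem_ker] at hw ⊢
      exact SemidirectProduct.ext (h w hw)
        ((DFunLike.congr_fun (rightHom_comp_tupleLift ρ g t) w).trans hw)
    let σ := (FreeGroup.lift g).liftOfSurjective hg ⟨tupleLift ρ g t, hker⟩
    have hσ : σ.comp (FreeGroup.lift g) = tupleLift ρ g t :=
      MonoidHom.liftOfRightInverse_comp _ _ _ _
    have hσ_section : SemidirectProduct.rightHom.comp σ = MonoidHom.id H := by
      rw [← MonoidHom.cancel_right hg, MonoidHom.comp_assoc, hσ, rightHom_comp_tupleLift]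
      rfl
    refine ⟨_, isOneCocycle_left_of_rightHom_comp_eq_id σ hσ_section, funext fun i => ?_⟩
    have := DFunLike.congr_fun hσ (FreeGroup.of i)
    simp only [MonoidHom.comp_apply, FreeGroup.lift_apply_of] at this
    simp [this, tupleLift]

end Cocycle

section Quotient

def quotientUnder (A : Under R) (I : Ideal A.right) : Under R :=
  Under.mk (A.hom ≫ CommRingCat.ofHom (Ideal.Quotient.mk I))

def quotientUnder.mk (A : Under R) (I : Ideal A.right) : A ⟶ quotientUnder A I :=
  Under.homMk (CommRingCat.ofHom (Ideal.Quotient.mk I)) rfl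

variable {A : Under R} {I : Ideal A.right}

theorem quotientUnder.mk_surjective : Function.Surjective (quotientUnder.mk A I).right :=
  Ideal.Quotient.mk_surjective

theorem quotientUnder.hom_ext {Λ : Under R} {g g' : quotientUnder A I ⟶ Λ}
    (h : quotientUnder.mk A I ≫ g = quotientUnder.mk A I ≫ g') : g = g' := by
  ext y
  obtain ⟨x, rfl⟩ := quotientUnder.mk_surjective y
  exact congrArg (fun m : A ⟶ Λ => m.right x) h

theorem quotientUnder.le_ker_mk_comp {Λ : Under R} (g : quotientUnder A I ⟶ Λ) :
    I ≤ RingHom.ker (quotientUnder.mk A I ≫ g).right.hom := fun x hx => by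
  have hzero : (quotientUnder.mk A I).right x = 0 := Ideal.Quotient.eq_zero_iff_mem.mpr hx
  simp [RingHom.mem_ker, hzero]

def quotientUnder.lift {Λ : Under R} (f : A ⟶ Λ) (hf : I ≤ RingHom.ker f.right.hom) :
    quotientUnder A I ⟶ Λ :=
  Under.homMk (CommRingCat.ofHom (Ideal.Quotient.lift I f.right.hom hf))
    (by rw [← Under.w f]; rfl)

@[simp]
theorem quotientUnder.mk_comp_lift {Λ : Under R} (f : A ⟶ Λ)
    (hf : I ≤ RingHom.ker f.right.hom) : quotientUnder.mk A I ≫ quotientUnder.lift f hf = f := by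
  ext x
  exact Ideal.Quotient.lift_mk I f.right.hom hf

def quotientUnder.homEquiv (Λ : Under R) :
    (quotientUnder A I ⟶ Λ) ≃ {f : A ⟶ Λ // I ≤ RingHom.ker f.right.hom} where
  toFun g := ⟨quotientUnder.mk A I ≫ g, quotientUnder.le_ker_mk_comp g⟩
  invFun f := quotientUnder.lift f.1 f.2
  left_inv _ := quotientUnder.hom_ext (quotientUnder.mk_comp_lift _ _)
  right_inv _ := Subtype.ext (quotientUnder.mk_comp_lift _ _)

theorem corepresentableBy_quotientUnder {F : Under R ⥤ Type}
    (ι : ∀ Λ, F.obj Λ → (A ⟶ Λ)) (hι_inj : ∀ Λ, Function.Injective (ι Λ))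
    (hι_nat : ∀ {Λ Λ'} (h : Λ ⟶ Λ') (x : F.obj Λ), ι Λ' (F.map h x) = ι Λ x ≫ h)
    (hι_range : ∀ Λ (f : A ⟶ Λ), f ∈ Set.range (ι Λ) ↔ I ≤ RingHom.ker f.right.hom) :
    Nonempty (F.CorepresentableBy (quotientUnder A I)) := by
  let e : ∀ Λ, F.obj Λ ≃ {f : A ⟶ Λ // I ≤ RingHom.ker f.right.hom} := fun Λ =>
    Equiv.ofBijective (fun x => ⟨ι Λ x, (hι_range Λ _).1 ⟨x, rfl⟩⟩)
      ⟨fun x y hxy => hι_inj Λ (congrArg Subtype.val hxy),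
        fun f => ((hι_range Λ f.1).2 f.2).imp fun x hx => Subtype.ext hx⟩
  refine ⟨{ homEquiv := fun {Λ} => (quotientUnder.homEquiv Λ).trans (e Λ).symm
            homEquiv_comp := fun {Λ Λ'} h g => ?_ }⟩
  apply (e Λ').injective
  simp only [Equiv.trans_apply, Equiv.apply_symm_apply]
  refine Subtype.ext ?_
  change quotientUnder.mk A I ≫ g ≫ h = ι Λ' (F.map h ((e Λ).symm _))
  rw [hι_nat, ← Category.assoc]
  congr 1
  exact (congrArg Subtype.val ((e Λ).apply_symm_apply (quotientUnder.homEquiv Λ g))).symm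

end Quotient

namespace CategoryTheory.Functor.CorepresentableBy

variable {F : Under R ⥤ Type} {A : Under R} (rep : F.CorepresentableBy A)

theorem map_apply_eq_map_apply_iff {X Λ : Under R} (f : X ⟶ Λ) (x y : F.obj X) :
    F.map f x = F.map f y ↔ rep.homEquiv.symm x ≫ f = rep.homEquiv.symm y ≫ f := by
  rw [← rep.homEquiv.apply_eq_iff_eq, rep.homEquiv_comp, rep.homEquiv_comp,
    Equiv.apply_symm_apply, Equiv.apply_symm_apply]

def equalizerIdeal {X : Under R} {J : Type*} (x y : J → F.obj X) : Ideal X.right :=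
  Ideal.span (Set.range fun p : J × A.right =>
    (rep.homEquiv.symm (x p.1)).right.hom p.2 - (rep.homEquiv.symm (y p.1)).right.hom p.2)

theorem equalizerIdeal_le_ker_iff {X Λ : Under R} {J : Type*} (x y : J → F.obj X)
    (f : X ⟶ Λ) :
    rep.equalizerIdeal x y ≤ RingHom.ker f.right.hom ↔ ∀ j, F.map f (x j) = F.map f (y j) := by
  simp only [equalizerIdeal, Ideal.span_le, Set.range_subset_iff, SetLike.mem_coe,
    RingHom.mem_ker, Prod.forall, rep.map_apply_eq_map_apply_iff]
  refine forall_congr' fun j => ⟨fun h => ?_, fun h a => ?_⟩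
  · ext a
    simpa [sub_eq_zero] using h a
  · simpa [sub_eq_zero] using congrArg (fun m => m.right a) h

end CategoryTheory.Functor.CorepresentableBy

section Points

variable {Λ Λ' : Under R}

def autAction (Λ : Under R) : Γ →* MulAut (G.obj Λ) where
  toFun γ :=
    { toFun := (φ γ).hom.app Λ
      invFun := (φ γ).inv.app Λ
      left_inv := ConcreteCategory.congr_hom ((φ γ).hom_inv_id_app Λ)
      right_inv := ConcreteCategory.congr_hom ((φ γ).inv_hom_id_app Λ)
      map_mul' := map_mul _ }
  map_one' := by
    ext x
    exact congrArg (fun i : Aut G => i.hom.app Λ x) (map_one φ)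
  map_mul' γ₁ γ₂ := by
    ext x
    exact congrArg (fun i : Aut G => i.hom.app Λ x) (map_mul φ γ₁ γ₂)

theorem map_autAction (f : Λ ⟶ Λ') (γ : Γ) (x : G.obj Λ) :
    G.map f (autAction G Γ φ Λ γ x) = autAction G Γ φ Λ' γ (G.map f x) :=
  (ConcreteCategory.congr_hom ((φ γ).hom.naturality f) x).symm

theorem tupleLift_autAction_map_left {ι : Type*} (g : ι → Γ) (f : Λ ⟶ Λ') (t : ι → G.obj Λ)
    (w : FreeGroup ι) :
    (tupleLift (autAction G Γ φ Λ') g (G.map f ∘ t) w).left =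
      G.map f (tupleLift (autAction G Γ φ Λ) g t w).left := by
  let mapG : G.obj Λ ⋊[autAction G Γ φ Λ] Γ →* G.obj Λ' ⋊[autAction G Γ φ Λ'] Γ :=
    SemidirectProduct.map (G.map f).hom (MonoidHom.id Γ) fun γ =>
    MonoidHom.ext (map_autAction G Γ φ f γ)
  have hcomp : tupleLift (autAction G Γ φ Λ') g (G.map f ∘ t) =
      mapG.comp (tupleLift (autAction G Γ φ Λ) g t) :=
    FreeGroup.ext_hom _ _ fun i => by simp [tupleLift, mapG]
  rw [hcomp]
  rfl

theorem cocycleFunctor_obj_isOneCocycle (c : (cocycleFunctor G Γ φ).obj Λ) :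
    IsOneCocycle (autAction G Γ φ Λ) c.1 :=
  c.2

end Points

section Relators

variable {G Γ} {S : Finset Γ} {A AS : Under R}
  (repA : (G ⋙ forget GrpCat).CorepresentableBy A)
  (repAS : (tupleFunctor G Γ S).CorepresentableBy AS)

def relatorIdeal : Ideal AS.right :=
  repA.equalizerIdeal
    (fun w : {w : FreeGroup S // FreeGroup.lift Subtype.val w = 1} =>
      (tupleLift (autAction G Γ φ AS) Subtype.val (repAS.homEquiv (𝟙 AS)) w).left)
    (fun _ => 1)

theorem relatorIdeal_le_ker_iff {Λ : Under R} (f : AS ⟶ Λ) :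
    relatorIdeal φ repA repAS ≤ RingHom.ker f.right.hom ↔
      ∀ w, FreeGroup.lift Subtype.val w = 1 →
        (tupleLift (autAction G Γ φ Λ) Subtype.val (repAS.homEquiv f) w).left = 1 := by
  have huniv : repAS.homEquiv f = G.map f ∘ repAS.homEquiv (𝟙 AS) := by
    conv_lhs => rw [← Category.id_comp f, repAS.homEquiv_comp]
    rfl
  rw [relatorIdeal, repA.equalizerIdeal_le_ker_iff, Subtype.forall, huniv,
    ← (G.map f).hom.map_one]
  refine forall₂_congr fun w _ => ?_
  rw [tupleLift_autAction_map_left G Γ φ _ f (repAS.homEquiv (𝟙 AS))]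
  rfl

variable {φ}

def cocycleRestriction {Λ : Under R} (c : (cocycleFunctor G Γ φ).obj Λ) : AS ⟶ Λ :=
  repAS.homEquiv.symm (c.1 ∘ (↑))

theorem cocycleRestriction_injective (hgen : Function.Surjective (FreeGroup.lift ((↑) : S → Γ)))
    (Λ : Under R) : Function.Injective (cocycleRestriction (φ := φ) repAS (Λ := Λ)) :=
  fun c c' h => Subtype.ext ((cocycleFunctor_obj_isOneCocycle G Γ φ c).ext_of_comp_eq hgen
    (cocycleFunctor_obj_isOneCocycle G Γ φ c') (repAS.homEquiv.symm.injective h))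

theorem cocycleRestriction_map {Λ Λ' : Under R} (h : Λ ⟶ Λ')
    (c : (cocycleFunctor G Γ φ).obj Λ) :
    cocycleRestriction repAS ((cocycleFunctor G Γ φ).map h c) = cocycleRestriction repAS c ≫ h := by
  refine repAS.homEquiv.symm_apply_eq.mpr ?_
  rw [repAS.homEquiv_comp]
  exact (congrArg ((tupleFunctor G Γ S).map h) (repAS.homEquiv.apply_symm_apply (c.1 ∘ (↑)))).symm

theorem mem_range_cocycleRestriction_iff
    (hgen : Function.Surjective (FreeGroup.lift ((↑) : S → Γ))) {Λ : Under R} (f : AS ⟶ Λ) :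
    f ∈ Set.range (cocycleRestriction (φ := φ) repAS) ↔
      relatorIdeal φ repA repAS ≤ RingHom.ker f.right.hom := by
  calc f ∈ Set.range (cocycleRestriction repAS)
      ↔ ∃ c, IsOneCocycle (autAction G Γ φ Λ) c ∧ c ∘ (↑) = repAS.homEquiv f := by
        constructor
        · rintro ⟨c, rfl⟩
          exact ⟨c.1, c.2, (repAS.homEquiv.apply_symm_apply _).symm⟩
        · rintro ⟨c, hc, hct⟩
          exact ⟨⟨c, hc⟩, by simp [cocycleRestriction, hct]⟩
    _ ↔ _ := exists_isOneCocycle_comp_eq_iff hgen _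
    _ ↔ _ := (relatorIdeal_le_ker_iff φ repA repAS f).symm

end Relators

/-- **Representability of the scheme of 1-cocycles**: if `Γ` is generated by a
finite set `S` and acts on an affine group scheme `Ĝ` over `R` (an affine
scheme means a corepresentable points functor), then the functor
`Λ ↦ Z¹(Γ, Ĝ(Λ))` of sections of `Ĝ(Λ) ⋊ Γ → Γ` is representable by an affine
scheme over `R`, namely a closed subscheme of `Ĝ^S` (its coordinate ring is a
quotient of that of `Ĝ^S`). -/
theorem cocycle_functor_corepresentable
    (A : Under R) (repA : (G ⋙ forget GrpCat).CorepresentableBy A)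
    (S : Finset Γ) (hS : Subgroup.closure (S : Set Γ) = ⊤)
    (AS : Under R) (repAS : (tupleFunctor G Γ S).CorepresentableBy AS) :
    ∃ (B : Under R) (q : AS ⟶ B), Function.Surjective q.right ∧
      Nonempty ((cocycleFunctor G Γ φ).CorepresentableBy B) := by
  have hgen : Function.Surjective (FreeGroup.lift ((↑) : S → Γ)) := by
    rw [← MonoidHom.range_eq_top, FreeGroup.range_lift_eq_closure, Subtype.range_coe]
    exact hS
  exact ⟨_, quotientUnder.mk AS (relatorIdeal φ repA repAS), quotientUnder.mk_surjective,
    corepresentableBy_quotientUnder (fun _ => cocycleRestriction repAS)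
      (cocycleRestriction_injective repAS hgen) (cocycleRestriction_map repAS)
      (fun _ => mem_range_cocycleRestriction_iff repA repAS hgen)⟩
end
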